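/- arXiv:1109.3176 — 2 statements merged into one kernel-verified Lean document; each statement's English description precedes it below -/
import Mathlib

section
/- Let k be a field, Q a strongly locally finite quiver, and M a representation in Rep(Q). Then: (1) if M is almost finitely co-presented, then soc M is finitely supported and essential in M, and supp M is socle-finite and contains no right infinite path; (2) if M is almost finitely presented, then top M is finitely supported and essential over M, and supp M is top-finite and contains no left infinite path. -/
/-!
A monomorphism `M ⟶ ⨁ᵢ I_{aᵢ} ⊗ Vᵢ` shows that every nonzero element of `M(x)` survives along
some path from `x` to one of the finitely many vertices `aᵢ`. Since `Q` is interval-finite, the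
lengths of such paths are bounded, so pushing a nonzero element along a longest path on which it
survives lands in the socle; and the socle can only live at the `aᵢ`.

Dually, an epimorphism `⨁ᵢ P_{aᵢ} ⊗ Vᵢ ⟶ M` shows that `M(y)` is spanned by the images of the
`M(aᵢ)` along paths. Away from the `aᵢ` these images lie in the radical, and a subrepresentation
`N` with `N + rad M = M` captures everything modulo images along ever longer paths, which vanish
once the length exceeds the bound on paths from the `aᵢ`.
-/

open CategoryTheory CategoryTheory.Limits

/-- A quiver is strongly locally finite if it is locally finite (finitely many arrows
starting and ending at every vertex) and interval-finite (finitely many paths between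
any two vertices). -/
def StronglyLocallyFinite (Q : Type) [Quiver.{0} Q] : Prop :=
  (∀ x : Q, Finite (Σ y : Q, x ⟶ y)) ∧
  (∀ y : Q, Finite (Σ x : Q, x ⟶ y)) ∧
  (∀ x y : Q, Finite (Quiver.Path x y))

variable (k : Type) [Field k] (Q : Type) [Quiver.{0} Q]

/-- The category `Rep(Q)` of `k`-representations of `Q`, i.e. functors from the
path category of `Q` to `k`-vector spaces. -/
abbrev RepQ := Paths Q ⥤ ModuleCat.{0} k

instance : HasFiniteBiproducts (RepQ k Q) := Abelian.hasFiniteBiproducts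

variable {Q}

/-- A vertex of `Q`, seen as an object of the path category. -/
abbrev vtx (x : Q) : Paths Q := x

/-- An arrow of `Q`, seen as a morphism of the path category. -/
abbrev arr {x y : Q} (e : x ⟶ y) : vtx x ⟶ vtx y := e.toPath

/-- A path of `Q`, seen as a morphism of the path category. -/
abbrev pth {x y : Q} (p : Quiver.Path x y) : vtx x ⟶ vtx y := p

universe uC vC

/-- Natural transformations between functors lifted from prefunctors are determined
by vertexwise data commuting with the arrow maps. -/
def liftNatTrans {C : Type uC} [Category.{vC} C] {φ ψ : Q ⥤q C}
    (app : ∀ x : Q, φ.obj x ⟶ ψ.obj x)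
    (h : ∀ {x y : Q} (e : x ⟶ y), φ.map e ≫ app y = app x ≫ ψ.map e) :
    Paths.lift φ ⟶ Paths.lift ψ where
  app x := app x
  naturality x y p := by
    change Quiver.Path (V := Q) x y at p
    induction p with
    | nil =>
      exact (Category.id_comp _).trans (Category.comp_id _).symm
    | cons p e ih =>
      exact (Category.assoc _ _ _).trans (by
        erw [h e, ← Category.assoc, ih, Category.assoc]; rfl)

variable (Q) in
/-- The prefunctor underlying the indecomposable projective representation `P_a`. -/
noncomputable def projPre (a : Q) : Q ⥤q ModuleCat.{0} k where
  obj x := ModuleCat.of k (Quiver.Path a x →₀ k)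
  map {x y} e := ModuleCat.ofHom (Finsupp.lmapDomain k k (fun ρ : Quiver.Path a x => ρ.cons e))

variable (Q) in
/-- The indecomposable projective representation `P_a`: the value at `x` is the
`k`-vector space with basis the set of paths from `a` to `x`, and an arrow acts by
composition of paths. -/
noncomputable def projRep (a : Q) : RepQ k Q := Paths.lift (projPre k Q a)

variable (Q) in
/-- The prefunctor underlying the indecomposable injective representation `I_a`. -/
noncomputable def injPre (a : Q) : Q ⥤q ModuleCat.{0} k where
  obj x := ModuleCat.of k (Quiver.Path x a → k)
  map {x y} e := ModuleCat.ofHom (LinearMap.funLeft k k (fun σ : Quiver.Path y a => (Quiver.Hom.toPath e).comp σ))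

variable (Q) in
/-- The indecomposable injective representation `I_a`: the value at `x` is the
`k`-vector space with basis the set of paths from `x` to `a` (realised as the dual-style
function space `Quiver.Path x a → k`, which is the same as the span of the paths since `Q`
is interval-finite); the arrow `α : x ⟶ y` sends a path `ρα` to `ρ` and kills the paths
not factoring through `α`. -/
noncomputable def injRep (a : Q) : RepQ k Q := Paths.lift (injPre k Q a)

variable (Q) in
/-- The representation with value `k` everywhere, all arrows acting as the identity. -/
noncomputable def unitRep : RepQ k Q :=
  Paths.lift { obj := fun _ => ModuleCat.of k k, map := fun _ => ModuleCat.ofHom LinearMap.id }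

variable (Q) in
/-- The prefunctor underlying the simple representation `S_a`. -/
noncomputable def simplePre (a : Q) : Q ⥤q ModuleCat.{0} k where
  obj x := ModuleCat.of k (PLift (x = a) → k)
  map _ := 0

variable (Q) in
/-- The simple representation `S_a` concentrated at the vertex `a`. -/
noncomputable def simpleRep (a : Q) : RepQ k Q := Paths.lift (simplePre k Q a)

/-- The representation `M ⊗_k V` obtained by tensoring vertexwise with a `k`-space `V`. -/
noncomputable def tensorRep (M : RepQ k Q) (V : ModuleCat.{0} k) : RepQ k Q :=
  M ⋙ MonoidalCategory.tensorRight V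

open Classical in
/-- Auxiliary linear map used to define restrictions of representations. -/
noncomputable def piCondMap {A B : Type} [AddCommGroup A] [Module k A] [AddCommGroup B]
    [Module k B] (φ : A →ₗ[k] B) (P P' : Prop) : (PLift P → A) →ₗ[k] (PLift P' → B) where
  toFun f _ := if h : P then φ (f ⟨h⟩) else 0
  map_add' f g := by funext _; dsimp; split <;> simp
  map_smul' c f := by funext _; dsimp; split <;> simp

variable (Q) in
/-- The prefunctor underlying the restriction of `M` to the full subquiver generated
by a set `S` of vertices. -/
noncomputable def restrictPre (M : RepQ k Q) (S : Set Q) : Q ⥤q ModuleCat.{0} k where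
  obj x := ModuleCat.of k (PLift (x ∈ S) → M.obj (vtx x))
  map {x y} e := ModuleCat.ofHom (piCondMap k (M.map (arr e)).hom (x ∈ S) (y ∈ S))

variable (Q) in
/-- The restriction `M_S` of a representation `M` to the full subquiver generated by a
set `S` of vertices: the value at `x ∈ S` is `M(x)`, the value elsewhere is `0`, arrows
with both ends in `S` act as in `M` and the other arrows act as zero. -/
noncomputable def restrictRep (M : RepQ k Q) (S : Set Q) : RepQ k Q :=
  Paths.lift (restrictPre k Q M S)

variable (Q) in
/-- The restriction `f_S` of a morphism of representations to the full subquiver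
generated by a set `S` of vertices. -/
noncomputable def restrictHom {M N : RepQ k Q} (f : M ⟶ N) (S : Set Q) :
    restrictRep k Q M S ⟶ restrictRep k Q N S :=
  liftNatTrans (fun x => ModuleCat.ofHom
      (LinearMap.compLeft (f.app (vtx x)).hom (PLift (x ∈ S)))) (by
    intro x y e
    ext g
    funext hy
    show (LinearMap.compLeft (f.app (vtx y)).hom (PLift (y ∈ S)))
        (piCondMap k (M.map (arr e)).hom (x ∈ S) (y ∈ S) g) hy =
      (piCondMap k (N.map (arr e)).hom (x ∈ S) (y ∈ S))
        (LinearMap.compLeft (f.app (vtx x)).hom (PLift (x ∈ S)) g) hy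
    by_cases hx : x ∈ S
    · simp only [piCondMap, LinearMap.compLeft, LinearMap.coe_mk, AddHom.coe_mk, dif_pos hx]
      exact congrArg (fun φ => ModuleCat.Hom.hom φ (g ⟨hx⟩)) (f.naturality (arr e))
    · simp [piCondMap, LinearMap.compLeft, dif_neg hx]
      exact map_zero (f.app (vtx y)).hom)

variable (Q) in
/-- A subrepresentation of a representation, given by a family of subspaces stable
under the arrow maps. -/
structure SubRep (M : RepQ k Q) : Type where
  carrier : ∀ x : Q, Submodule k (M.obj (vtx x))
  stable : ∀ {x y : Q} (e : x ⟶ y) (v : M.obj (vtx x)),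
    v ∈ carrier x → M.map (arr e) v ∈ carrier y

variable (Q) in
/-- The socle of `M` at a vertex: the intersection of the kernels of the maps
associated to the arrows starting there. -/
def socle (M : RepQ k Q) (x : Q) : Submodule k (M.obj (vtx x)) :=
  ⨅ (y : Q) (e : x ⟶ y), LinearMap.ker (M.map (arr e)).hom

variable (Q) in
/-- The radical of `M` at a vertex: the sum of the images of the maps associated to the
arrows ending there. -/
def radical (M : RepQ k Q) (x : Q) : Submodule k (M.obj (vtx x)) :=
  ⨆ (y : Q) (e : y ⟶ x), LinearMap.range (M.map (arr e)).hom

variable (Q) in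
/-- The support of a representation: the set of vertices with nonzero value. -/
def suppR (M : RepQ k Q) : Set Q := {x : Q | Nontrivial (M.obj (vtx x))}

variable (Q) in
/-- A representation is locally finite dimensional if all its vertex spaces are
finite dimensional; these form the category `rep(Q)`. -/
def LocFinDim (M : RepQ k Q) : Prop := ∀ x : Q, FiniteDimensional k (M.obj (vtx x))

variable (Q) in
/-- A representation is finite dimensional if the total dimension `Σ_x dim M(x)` is finite,
i.e. it is locally finite dimensional with finite support. -/
def FinDimRep (M : RepQ k Q) : Prop := (suppR k Q M).Finite ∧ LocFinDim k Q M

variable (Q) in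
/-- The socle of `M` is an essential subrepresentation of `M`. -/
def SocleEssential (M : RepQ k Q) : Prop :=
  ∀ N : SubRep k Q M, (∃ x, N.carrier x ≠ ⊥) → ∃ x, N.carrier x ⊓ socle k Q M x ≠ ⊥

variable (Q) in
/-- The socle of `M` is finitely supported. -/
def SocleFinSupported (M : RepQ k Q) : Prop := {x : Q | socle k Q M x ≠ ⊥}.Finite

variable (Q) in
/-- The radical of `M` is a superfluous subrepresentation of `M`,
i.e. the top of `M` is essential over `M`. -/
def TopEssential (M : RepQ k Q) : Prop :=
  ∀ N : SubRep k Q M, (∀ x, N.carrier x ⊔ radical k Q M x = ⊤) → ∀ x, N.carrier x = ⊤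

variable (Q) in
/-- The top of `M` is finitely supported. -/
def TopFinSupported (M : RepQ k Q) : Prop := {x : Q | radical k Q M x ≠ ⊤}.Finite

variable (Q) in
/-- Membership in `Inj(Q)`: the full additive subcategory of `Rep(Q)` generated by the
representations `I_a ⊗ V` with `a` a vertex and `V` a `k`-space. -/
def MemInj (M : RepQ k Q) : Prop :=
  ∃ (n : ℕ) (a : Fin n → Q) (V : Fin n → ModuleCat.{0} k),
    Nonempty (M ≅ ⨁ (fun i => tensorRep k (injRep k Q (a i)) (V i)))

variable (Q) in
/-- Membership in `Proj(Q)`: the full additive subcategory of `Rep(Q)` generated by the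
representations `P_a ⊗ V` with `a` a vertex and `V` a `k`-space. -/
def MemProj (M : RepQ k Q) : Prop :=
  ∃ (n : ℕ) (a : Fin n → Q) (V : Fin n → ModuleCat.{0} k),
    Nonempty (M ≅ ⨁ (fun i => tensorRep k (projRep k Q (a i)) (V i)))

variable (Q) in
/-- Membership in `inj(Q)`: the locally finite dimensional representations in `Inj(Q)`. -/
def MemInjL (M : RepQ k Q) : Prop := MemInj k Q M ∧ LocFinDim k Q M

variable (Q) in
/-- Membership in `proj(Q)`: the locally finite dimensional representations in `Proj(Q)`. -/
def MemProjL (M : RepQ k Q) : Prop := MemProj k Q M ∧ LocFinDim k Q M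

variable (Q) in
/-- A representation is almost finitely presented if it admits a projective resolution
`0 → P₁ → P₀ → M → 0` with `P₀, P₁ ∈ Proj(Q)`. -/
def AlmostFinPresented (M : RepQ k Q) : Prop :=
  ∃ (P₁ P₀ : RepQ k Q) (f : P₁ ⟶ P₀) (g : P₀ ⟶ M) (w : f ≫ g = 0),
    MemProj k Q P₁ ∧ MemProj k Q P₀ ∧ (ShortComplex.mk f g w).ShortExact

variable (Q) in
/-- A representation is almost finitely co-presented if it admits an injective
co-resolution `0 → M → I₀ → I₁ → 0` with `I₀, I₁ ∈ Inj(Q)`. -/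
def AlmostFinCopresented (M : RepQ k Q) : Prop :=
  ∃ (I₀ I₁ : RepQ k Q) (f : M ⟶ I₀) (g : I₀ ⟶ I₁) (w : f ≫ g = 0),
    MemInj k Q I₀ ∧ MemInj k Q I₁ ∧ (ShortComplex.mk f g w).ShortExact

variable (Q) in
/-- A representation is finitely presented if it admits a projective resolution
`0 → P₁ → P₀ → M → 0` with `P₀, P₁ ∈ proj(Q)`; these form the category `rep^+(Q)`. -/
def FinPresented (M : RepQ k Q) : Prop :=
  ∃ (P₁ P₀ : RepQ k Q) (f : P₁ ⟶ P₀) (g : P₀ ⟶ M) (w : f ≫ g = 0),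
    MemProjL k Q P₁ ∧ MemProjL k Q P₀ ∧ (ShortComplex.mk f g w).ShortExact

variable (Q) in
/-- A representation is finitely co-presented if it admits an injective co-resolution
`0 → M → I₀ → I₁ → 0` with `I₀, I₁ ∈ inj(Q)`; these form the category `rep^-(Q)`. -/
def FinCopresented (M : RepQ k Q) : Prop :=
  ∃ (I₀ I₁ : RepQ k Q) (f : M ⟶ I₀) (g : I₀ ⟶ I₁) (w : f ≫ g = 0),
    MemInjL k Q I₀ ∧ MemInjL k Q I₁ ∧ (ShortComplex.mk f g w).ShortExact

variable (Q) in
/-- A right infinite path with all vertices in `S`. -/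
def HasRightInfPathIn (S : Set Q) : Prop :=
  ∃ (p : ℕ → Q) (_ : ∀ n, p n ⟶ p (n + 1)), ∀ n, p n ∈ S

variable (Q) in
/-- A left infinite path with all vertices in `S`. -/
def HasLeftInfPathIn (S : Set Q) : Prop :=
  ∃ (p : ℕ → Q) (_ : ∀ n, p (n + 1) ⟶ p n), ∀ n, p n ∈ S

/-- The list of vertices visited by a path. -/
def pathVerts {V : Type*} [Quiver V] {x : V} : ∀ {y : V}, Quiver.Path x y → List V
  | _, Quiver.Path.nil => [x]
  | y, Quiver.Path.cons p _ => pathVerts p ++ [y]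

variable (Q) in
/-- The full subquiver generated by `S` is socle-finite: every vertex of `S` is a
predecessor (within `S`) of one of finitely many fixed vertices. -/
def SetSocleFinite (S : Set Q) : Prop :=
  ∃ T : Finset Q, ∀ x ∈ S, ∃ t ∈ T, ∃ p : Quiver.Path x t, ∀ z ∈ pathVerts p, z ∈ S

variable (Q) in
/-- The full subquiver generated by `S` is top-finite: every vertex of `S` is a
successor (within `S`) of one of finitely many fixed vertices. -/
def SetTopFinite (S : Set Q) : Prop :=
  ∃ T : Finset Q, ∀ x ∈ S, ∃ t ∈ T, ∃ p : Quiver.Path t x, ∀ z ∈ pathVerts p, z ∈ S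

section AlmostSplit

universe uD vD
variable {C : Type uD} [Category.{vD} C]

/-- A morphism is a section if it admits a left inverse. -/
def IsSect {X Y : C} (f : X ⟶ Y) : Prop := ∃ r : Y ⟶ X, f ≫ r = 𝟙 X

/-- A morphism is a retraction if it admits a right inverse. -/
def IsRetr {X Y : C} (f : X ⟶ Y) : Prop := ∃ s : Y ⟶ X, s ≫ f = 𝟙 Y

/-- A morphism `g : Y ⟶ Z` is right almost split relative to the object class `P` if it is
not a retraction and every non-retraction `h : W ⟶ Z` with `W` in `P` factors through `g`. -/
def RightAS (P : C → Prop) {Y Z : C} (g : Y ⟶ Z) : Prop :=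
  ¬ IsRetr g ∧ ∀ ⦃W : C⦄, P W → ∀ h : W ⟶ Z, ¬ IsRetr h → ∃ u : W ⟶ Y, u ≫ g = h

/-- A morphism `f : X ⟶ Y` is left almost split relative to the object class `P` if it is
not a section and every non-section `h : X ⟶ W` with `W` in `P` factors through `f`. -/
def LeftAS (P : C → Prop) {X Y : C} (f : X ⟶ Y) : Prop :=
  ¬ IsSect f ∧ ∀ ⦃W : C⦄, P W → ∀ h : X ⟶ W, ¬ IsSect h → ∃ u : Y ⟶ W, f ≫ u = h

/-- A morphism `g : Y ⟶ Z` is right minimal. -/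
def RightMin {Y Z : C} (g : Y ⟶ Z) : Prop := ∀ u : Y ⟶ Y, u ≫ g = g → IsIso u

/-- A morphism `f : X ⟶ Y` is left minimal. -/
def LeftMin {X Y : C} (f : X ⟶ Y) : Prop := ∀ u : Y ⟶ Y, f ≫ u = f → IsIso u

/-- Minimal right almost split relative to the object class `P`. -/
def MinRightAS (P : C → Prop) {Y Z : C} (g : Y ⟶ Z) : Prop := RightAS P g ∧ RightMin g

/-- Minimal left almost split relative to the object class `P`. -/
def MinLeftAS (P : C → Prop) {X Y : C} (f : X ⟶ Y) : Prop := LeftAS P f ∧ LeftMin f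

/-- An object is indecomposable if it is nonzero and its only idempotent endomorphisms
are `0` and the identity (equivalently, it is not a direct sum of two nonzero objects). -/
def Indec [Limits.HasZeroMorphisms C] (X : C) : Prop :=
  ¬ Limits.IsZero X ∧ ∀ e : X ⟶ X, e ≫ e = e → e = 0 ∨ e = 𝟙 X

/-- A morphism is irreducible relative to the object class `P` if it is neither a section
nor a retraction while in any factorization through an object of `P` the first factor is a
section or the second factor is a retraction. -/
def IrredOn (P : C → Prop) {X Y : C} (f : X ⟶ Y) : Prop :=
  ¬ IsSect f ∧ ¬ IsRetr f ∧
    ∀ ⦃Z : C⦄, P Z → ∀ (g : X ⟶ Z) (h : Z ⟶ Y), g ≫ h = f → IsSect g ∨ IsRetr h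

/-- An object `M` is projective relative to the object class `P`: any morphism from `M` to
the codomain of an epimorphism between objects of `P` lifts. -/
def ProjOn (P : C → Prop) (M : C) : Prop :=
  ∀ ⦃A B : C⦄, P A → P B → ∀ (g : A ⟶ B), Epi g → ∀ h : M ⟶ B, ∃ l : M ⟶ A, l ≫ g = h

/-- An object `M` is injective relative to the object class `P`: any morphism to `M` from
the domain of a monomorphism between objects of `P` extends. -/
def InjOn (P : C → Prop) (M : C) : Prop :=
  ∀ ⦃A B : C⦄, P A → P B → ∀ (g : A ⟶ B), Mono g → ∀ h : A ⟶ M, ∃ l : B ⟶ M, g ≫ l = h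

/-- An essential monomorphism, relative to the object class `P`. -/
def EssMonoOn (P : C → Prop) {X Y : C} (f : X ⟶ Y) : Prop :=
  Mono f ∧ ∀ ⦃W : C⦄, P W → ∀ g : Y ⟶ W, Mono (f ≫ g) → Mono g

/-- A superfluous epimorphism, relative to the object class `P`. -/
def SupEpiOn (P : C → Prop) {X Y : C} (f : X ⟶ Y) : Prop :=
  Epi f ∧ ∀ ⦃W : C⦄, P W → ∀ g : W ⟶ X, Epi (g ≫ f) → Epi g

end AlmostSplit

/-- An almost split (Auslander-Reiten) sequence, relative to the object class `P` in an
ambient abelian category: a short exact sequence with terms in `P` whose left map is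
minimal left almost split and whose right map is minimal right almost split relative
to `P`. -/
def IsASSeqOn {C : Type uC} [Category.{vC} C] [Abelian C] (P : C → Prop)
    (S : ShortComplex C) : Prop :=
  S.ShortExact ∧ P S.X₁ ∧ P S.X₂ ∧ P S.X₃ ∧ MinLeftAS P S.f ∧ MinRightAS P S.g

variable (Q) in
/-- The morphism `P_y ⟶ P_x` determined by a path `p` from `x` to `y`
(composition with `p`). -/
noncomputable def projPathTrans {x y : Q} (p : Quiver.Path x y) :
    projRep k Q y ⟶ projRep k Q x :=
  liftNatTrans (fun z => ModuleCat.ofHom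
      (Finsupp.lmapDomain k k (fun ρ : Quiver.Path y z => p.comp ρ))) (by
    intro z w e
    apply ModuleCat.hom_ext
    show (Finsupp.lmapDomain k k _).comp (Finsupp.lmapDomain k k _) =
      (Finsupp.lmapDomain k k _).comp (Finsupp.lmapDomain k k _)
    rw [← Finsupp.lmapDomain_comp, ← Finsupp.lmapDomain_comp]
    rfl)

variable (Q) in
/-- The morphism `I_y ⟶ I_x` determined by a path `p` from `x` to `y`. -/
noncomputable def injPathTrans {x y : Q} (p : Quiver.Path x y) :
    injRep k Q y ⟶ injRep k Q x :=
  liftNatTrans (fun z => ModuleCat.ofHom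
      (LinearMap.funLeft k k (fun σ : Quiver.Path z x => σ.comp p))) (by
    intro z w e
    ext h
    funext σ
    show h ((Quiver.Hom.toPath e).comp (σ.comp p)) = h (((Quiver.Hom.toPath e).comp σ).comp p)
    rw [Quiver.Path.comp_assoc] <;> try rfl)

variable (Q) in
/-- The linear combination of path morphisms `P_y ⟶ P_x` determined by an element of the
span of the paths from `x` to `y`. -/
noncomputable def projCombTrans {x y : Q} (c : Quiver.Path x y →₀ k) :
    projRep k Q y ⟶ projRep k Q x :=
  c.sum (fun p cp => cp • projPathTrans k Q p)

variable (Q) in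
/-- The linear combination of path morphisms `I_y ⟶ I_x` determined by an element of the
span of the paths from `x` to `y`. -/
noncomputable def injCombTrans {x y : Q} (c : Quiver.Path x y →₀ k) :
    injRep k Q y ⟶ injRep k Q x :=
  c.sum (fun p cp => cp • injPathTrans k Q p)

variable (Q) in
/-- Evaluation of a morphism `P_y ⟶ P_x` on the trivial path, yielding an element of the
span of the paths from `x` to `y`. -/
noncomputable def evalProjHom {x y : Q} (u : projRep k Q y ⟶ projRep k Q x) :
    Quiver.Path x y →₀ k :=
  u.app (vtx y) (Finsupp.single Quiver.Path.nil 1)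

open Classical in
variable (Q) in
/-- Evaluation of a morphism `I_y ⟶ I_x`, yielding an element of the span of the paths
from `x` to `y` (here `Q` is interval-finite). -/
noncomputable def evalInjHom (hfin : ∀ x y : Q, Finite (Quiver.Path x y)) {x y : Q}
    (u : injRep k Q y ⟶ injRep k Q x) : Quiver.Path x y →₀ k :=
  haveI := hfin x y
  Finsupp.equivFunOnFinite.symm (fun p => u.app (vtx x) (Pi.single p 1) Quiver.Path.nil)

variable (Q) in
/-- The Nakayama functor `ν` applied to a morphism between objects of `proj(Q)` written as
finite direct sums of representations `P_a`; the value is the corresponding morphism between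
the direct sums of the representations `I_a`. -/
noncomputable def nuMap {r s : ℕ} (xv : Fin r → Q) (yv : Fin s → Q)
    (f : (⨁ fun j => projRep k Q (yv j)) ⟶ (⨁ fun i => projRep k Q (xv i))) :
    (⨁ fun j => injRep k Q (yv j)) ⟶ (⨁ fun i => injRep k Q (xv i)) :=
  biproduct.matrix fun j i =>
    injCombTrans k Q (evalProjHom k Q
      (biproduct.ι (fun j => projRep k Q (yv j)) j ≫ f ≫ biproduct.π (fun i => projRep k Q (xv i)) i))

variable (Q) in
/-- The inverse Nakayama functor `ν⁻` applied to a morphism between objects of `inj(Q)`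
written as finite direct sums of representations `I_a`. -/
noncomputable def nuInvMap (hfin : ∀ x y : Q, Finite (Quiver.Path x y)) {r s : ℕ}
    (xv : Fin r → Q) (yv : Fin s → Q)
    (g : (⨁ fun i => injRep k Q (xv i)) ⟶ (⨁ fun j => injRep k Q (yv j))) :
    (⨁ fun i => projRep k Q (xv i)) ⟶ (⨁ fun j => projRep k Q (yv j)) :=
  biproduct.matrix fun i j =>
    projCombTrans k Q (evalInjHom k Q hfin
      (biproduct.ι (fun i => injRep k Q (xv i)) i ≫ g ≫ biproduct.π (fun j => injRep k Q (yv j)) j))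

variable (Q) in
/-- `0 → ⊕_j P_{y_j} → ⊕_i P_{x_i} → M → 0` is a minimal projective resolution:
a short exact sequence in which the two epimorphisms onto `M` and onto the kernel of `ε`
are projective covers (superfluous epimorphisms). -/
structure IsMinProjRes (M : RepQ k Q) {r s : ℕ} (xv : Fin r → Q) (yv : Fin s → Q)
    (f : (⨁ fun j => projRep k Q (yv j)) ⟶ (⨁ fun i => projRep k Q (xv i)))
    (ε : (⨁ fun i => projRep k Q (xv i)) ⟶ M) : Prop where
  w : f ≫ ε = 0
  shortExact : (ShortComplex.mk f ε w).ShortExact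
  superfluous_ε : SupEpiOn (fun _ => True) ε
  superfluous_f : SupEpiOn (fun _ => True) (kernel.lift ε f w)

variable (Q) in
/-- `0 → M → ⊕_i I_{x_i} → ⊕_j I_{y_j} → 0` is a minimal injective co-resolution:
a short exact sequence in which the two monomorphisms from `M` and from the cokernel of `ι`
are injective hulls (essential monomorphisms). -/
structure IsMinInjCores (M : RepQ k Q) {r s : ℕ} (xv : Fin r → Q) (yv : Fin s → Q)
    (ι : M ⟶ (⨁ fun i => injRep k Q (xv i)))
    (g : (⨁ fun i => injRep k Q (xv i)) ⟶ (⨁ fun j => injRep k Q (yv j))) : Prop where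
  w : ι ≫ g = 0
  shortExact : (ShortComplex.mk ι g w).ShortExact
  essential_ι : EssMonoOn (fun _ => True) ι
  essential_g : EssMonoOn (fun _ => True) (cokernel.desc ι g w)

variable (Q) in
/-- `N` is an Auslander-Reiten translate `DTr M` of `M`: for some minimal projective
resolution `0 → P₁ → P₀ → M → 0` by finite direct sums of representations `P_a`,
the representation `N` is isomorphic to the kernel of `ν(f) : ν(P₁) ⟶ ν(P₀)`. -/
def IsDTrOf (N M : RepQ k Q) : Prop :=
  ∃ (r s : ℕ) (xv : Fin r → Q) (yv : Fin s → Q)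
    (f : (⨁ fun j => projRep k Q (yv j)) ⟶ (⨁ fun i => projRep k Q (xv i)))
    (ε : (⨁ fun i => projRep k Q (xv i)) ⟶ M),
      IsMinProjRes k Q M xv yv f ε ∧ Nonempty (N ≅ kernel (nuMap k Q xv yv f))

variable (Q) in
/-- `N` is an inverse Auslander-Reiten translate `TrD M` of `M`: for some minimal
injective co-resolution `0 → M → I₀ → I₁ → 0` by finite direct sums of representations
`I_a`, the representation `N` is isomorphic to the cokernel of `ν⁻(g) : ν⁻(I₀) ⟶ ν⁻(I₁)`. -/
def IsTrDOf (hfin : ∀ x y : Q, Finite (Quiver.Path x y)) (N M : RepQ k Q) : Prop :=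
  ∃ (r s : ℕ) (xv : Fin r → Q) (yv : Fin s → Q)
    (ι : M ⟶ (⨁ fun i => injRep k Q (xv i)))
    (g : (⨁ fun i => injRep k Q (xv i)) ⟶ (⨁ fun j => injRep k Q (yv j))),
      IsMinInjCores k Q M xv yv ι g ∧ Nonempty (N ≅ cokernel (nuInvMap k Q hfin xv yv g))

variable (Q) in
/-- `N ≅ DTr^n M`, where in particular all the intermediate translates are defined. -/
def IsDTrPow : ℕ → RepQ k Q → RepQ k Q → Prop
  | 0, N, M => Nonempty (N ≅ M)
  | n + 1, N, M => ∃ L : RepQ k Q, IsDTrPow n L M ∧ IsDTrOf k Q N L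

variable (Q) in
/-- The quiver `Q` is connected: any two vertices are joined by a walk. -/
def QConnected : Prop :=
  ∀ x y : Q, Nonempty (Quiver.Path (a := (x : Quiver.Symmetrify Q)) (y : Quiver.Symmetrify Q))

section Paths

variable {k}

@[simp]
lemma map_pth_comp (M : RepQ k Q) {x y z : Q} (p : Quiver.Path x y) (q : Quiver.Path y z)
    (v : M.obj (vtx x)) : M.map (pth (p.comp q)) v = M.map (pth q) (M.map (pth p) v) := by
  rw [show pth (p.comp q) = pth p ≫ pth q from rfl, M.map_comp]
  rfl

@[simp]
lemma map_pth_nil (M : RepQ k Q) {x : Q} (v : M.obj (vtx x)) :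
    M.map (pth Quiver.Path.nil) v = v := by
  rw [show pth (Quiver.Path.nil : Quiver.Path x x) = 𝟙 (vtx x) from rfl, M.map_id]
  rfl

@[simp]
lemma map_pth_cons (M : RepQ k Q) {x y z : Q} (p : Quiver.Path x y) (e : y ⟶ z)
    (v : M.obj (vtx x)) : M.map (pth (p.cons e)) v = M.map (arr e) (M.map (pth p) v) :=
  map_pth_comp M p e.toPath v

lemma SubRep.map_pth_mem {M : RepQ k Q} (N : SubRep k Q M) {x z : Q} (p : Quiver.Path x z)
    {v : M.obj (vtx x)} (hv : v ∈ N.carrier x) : M.map (pth p) v ∈ N.carrier z := by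
  induction p with
  | nil => rwa [map_pth_nil]
  | cons p e ih => rw [map_pth_cons]; exact N.stable e _ ih

lemma nontrivial_of_mem_pathVerts (M : RepQ k Q) {x z : Q} (v : M.obj (vtx x))
    (p : Quiver.Path x z) (hp : M.map (pth p) v ≠ 0) :
    ∀ w ∈ pathVerts p, Nontrivial (M.obj (vtx w)) := by
  induction p with
  | nil =>
    intro w hw
    obtain rfl := List.mem_singleton.1 hw
    exact nontrivial_of_ne _ 0 (by rwa [map_pth_nil] at hp)
  | cons p e ih =>
    rw [map_pth_cons] at hp
    intro w hw
    rcases List.mem_append.1 hw with hw | hw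
    · exact ih (fun h => hp (by rw [h, map_zero])) w hw
    · obtain rfl := List.mem_singleton.1 hw
      exact nontrivial_of_ne _ 0 hp

lemma exists_forall_length_le (hfin : ∀ x y : Q, Finite (Quiver.Path x y)) {α : Type}
    [Finite α] (s t : α → Q) : ∃ D : ℕ, ∀ (i : α) (q : Quiver.Path (s i) (t i)), q.length ≤ D := by
  have hbdd : BddAbove (⋃ i, Set.range fun q : Quiver.Path (s i) (t i) => q.length) :=
    (Set.finite_iUnion fun i => haveI := hfin (s i) (t i); Set.finite_range _).bddAbove
  obtain ⟨D, hD⟩ := hbdd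
  exact ⟨D, fun i q => hD (Set.mem_iUnion.2 ⟨i, q, rfl⟩)⟩

lemma exists_path_length_eq_of_chain (p : ℕ → Q) (e : ∀ n, p n ⟶ p (n + 1)) (m : ℕ) :
    ∃ q : Quiver.Path (p 0) (p m), q.length = m := by
  induction m with
  | zero => exact ⟨.nil, rfl⟩
  | succ m ih =>
    obtain ⟨q, hq⟩ := ih
    exact ⟨q.cons (e m), by simp [hq]⟩

lemma exists_path_length_eq_of_chain_rev (p : ℕ → Q) (e : ∀ n, p (n + 1) ⟶ p n) (m : ℕ) :
    ∃ q : Quiver.Path (p m) (p 0), q.length = m := by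
  induction m with
  | zero => exact ⟨.nil, rfl⟩
  | succ m ih =>
    obtain ⟨q, hq⟩ := ih
    exact ⟨(e m).toPath.comp q, by simp [hq]; omega⟩

lemma not_hasRightInfPathIn_of_forall_path_to (hfin : ∀ x y : Q, Finite (Quiver.Path x y))
    {S T : Set Q} (hS : S.Finite) (hT : ∀ x ∈ T, ∃ s ∈ S, Nonempty (Quiver.Path x s)) :
    ¬ HasRightInfPathIn Q T := by
  rintro ⟨p, e, hp⟩
  have := hS.to_subtype
  obtain ⟨D, hD⟩ := exists_forall_length_le hfin (fun _ : S => p 0) Subtype.val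
  obtain ⟨q, hq⟩ := exists_path_length_eq_of_chain p e (D + 1)
  obtain ⟨s, hs, ⟨r⟩⟩ := hT _ (hp (D + 1))
  have := hD ⟨s, hs⟩ (q.comp r)
  simp only [Quiver.Path.length_comp, hq] at this
  omega

lemma not_hasLeftInfPathIn_of_forall_path_from (hfin : ∀ x y : Q, Finite (Quiver.Path x y))
    {S T : Set Q} (hS : S.Finite) (hT : ∀ x ∈ T, ∃ s ∈ S, Nonempty (Quiver.Path s x)) :
    ¬ HasLeftInfPathIn Q T := by
  rintro ⟨p, e, hp⟩
  have := hS.to_subtype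
  obtain ⟨D, hD⟩ := exists_forall_length_le hfin Subtype.val (fun _ : S => p 0)
  obtain ⟨q, hq⟩ := exists_path_length_eq_of_chain_rev p e (D + 1)
  obtain ⟨s, hs, ⟨r⟩⟩ := hT _ (hp (D + 1))
  have := hD ⟨s, hs⟩ (r.comp q)
  simp only [Quiver.Path.length_comp, hq] at this
  omega

end Paths

lemma TensorProduct.eq_zero_of_forall_rTensor_eq_zero {R A V : Type*} [CommRing R]
    [AddCommGroup A] [Module R A] [AddCommGroup V] [Module R V] [Module.Flat R V]
    {J : Type*} [Finite J] {B : J → Type*} [∀ j, AddCommGroup (B j)] [∀ j, Module R (B j)]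
    (φ : ∀ j, A →ₗ[R] B j) (hφ : ∀ a, (∀ j, φ j a = 0) → a = 0)
    (h : TensorProduct R A V) (h0 : ∀ j, LinearMap.rTensor V (φ j) h = 0) : h = 0 := by
  have := Fintype.ofFinite J
  classical
  have hpi : Function.Injective (LinearMap.pi φ) := by
    rw [← LinearMap.ker_eq_bot, LinearMap.ker_eq_bot']
    exact fun a ha => hφ a fun j => congrFun ha j
  have hcomp : TensorProduct.piLeft R V B ∘ₗ LinearMap.rTensor V (LinearMap.pi φ) =
      LinearMap.pi fun j => LinearMap.rTensor V (φ j) := by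
    ext a v j
    simp
  apply Module.Flat.rTensor_preserves_injective_linearMap (M := V) _ hpi
  apply (TensorProduct.piLeft R V B).injective
  rw [map_zero, map_zero, ← LinearEquiv.coe_toLinearMap, ← LinearMap.comp_apply, hcomp]
  exact funext h0

section Cogeneration

variable {k}

lemma mem_socle_iff (M : RepQ k Q) {x : Q} (v : M.obj (vtx x)) :
    v ∈ socle k Q M x ↔ ∀ (y : Q) (e : x ⟶ y), M.map (arr e) v = 0 := by
  simp only [socle, Submodule.mem_iInf, LinearMap.mem_ker]

lemma biproduct_app_eq_sum {J : Type} [Fintype J] (N : J → RepQ k Q) (x : Q)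
    (v : (⨁ N).obj (vtx x)) :
    v = ∑ j, (biproduct.ι N j).app (vtx x) ((biproduct.π N j).app (vtx x) v) := by
  have htotal : (∑ j, biproduct.π N j ≫ biproduct.ι N j).app (vtx x) v = v := by
    rw [biproduct.total]
    rfl
  rw [NatTrans.app_sum] at htotal
  change (∑ j, (biproduct.π N j ≫ biproduct.ι N j).app (vtx x)).hom v = v at htotal
  rw [ModuleCat.hom_sum, LinearMap.sum_apply] at htotal
  exact htotal.symm

variable (Q) in
def IsCogeneratedBy (M : RepQ k Q) (S : Set Q) : Prop :=
  ∀ (x : Q) (v : M.obj (vtx x)), v ≠ 0 → ∃ s ∈ S, ∃ q : Quiver.Path x s, M.map (pth q) v ≠ 0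

lemma IsCogeneratedBy.mono {M : RepQ k Q} {S T : Set Q} (hM : IsCogeneratedBy Q M S)
    (hST : S ⊆ T) : IsCogeneratedBy Q M T := by
  intro x v hv
  obtain ⟨s, hs, q, hq⟩ := hM x v hv
  exact ⟨s, hST hs, q, hq⟩

lemma injRep_map_pth (a : Q) {x y : Q} (q : Quiver.Path x y) (f : (injRep k Q a).obj (vtx x))
    (σ : Quiver.Path y a) :
    ((injRep k Q a).map (pth q) f : Quiver.Path y a → k) σ =
      (f : Quiver.Path x a → k) (q.comp σ) := by
  induction q with
  | nil => erw [map_pth_nil, Quiver.Path.nil_comp]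
  | cons q e ih =>
    erw [map_pth_cons]
    exact (ih _).trans (congrArg f (Quiver.Path.comp_assoc q e.toPath σ).symm)

lemma isCogeneratedBy_injRep (a : Q) : IsCogeneratedBy Q (injRep k Q a) {a} := by
  intro x f hf
  obtain ⟨q, hq⟩ := Function.ne_iff.1 hf
  refine ⟨a, rfl, q, fun h => hq ?_⟩
  have := injRep_map_pth a q f .nil
  rw [h] at this
  exact this.symm

lemma IsCogeneratedBy.tensorRep (hfin : ∀ x y : Q, Finite (Quiver.Path x y)) {N : RepQ k Q}
    {S : Set Q} (hS : S.Finite) (hN : IsCogeneratedBy Q N S) (V : ModuleCat.{0} k) :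
    IsCogeneratedBy Q (tensorRep k N V) S := by
  intro x h hh
  by_contra! hc
  have := hS.to_subtype
  have := fun s : S => hfin x s
  refine hh (TensorProduct.eq_zero_of_forall_rTensor_eq_zero (J := Σ s : S, Quiver.Path x s)
    (fun j => (N.map (pth j.2)).hom) (fun v hv => ?_) h fun j => hc j.1 j.1.2 j.2)
  by_contra hv0
  obtain ⟨s, hs, q, hq⟩ := hN x v hv0
  exact hq (hv ⟨⟨s, hs⟩, q⟩)

lemma IsCogeneratedBy.of_jointly_injective {M : RepQ k Q} {J : Type} {N : J → RepQ k Q}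
    {S : Set Q} (hN : ∀ j, IsCogeneratedBy Q (N j) S) (f : ∀ j, M ⟶ N j)
    (hf : ∀ (x : Q) (v : M.obj (vtx x)), v ≠ 0 → ∃ j, (f j).app (vtx x) v ≠ 0) :
    IsCogeneratedBy Q M S := by
  intro x v hv
  obtain ⟨j, hj⟩ := hf x v hv
  obtain ⟨s, hs, q, hq⟩ := hN j x _ hj
  refine ⟨s, hs, q, fun h => hq ?_⟩
  rw [← NatTrans.naturality_apply, h, map_zero]

lemma IsCogeneratedBy.of_mono {M N : RepQ k Q} {S : Set Q} (hN : IsCogeneratedBy Q N S)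
    (f : M ⟶ N) [Mono f] : IsCogeneratedBy Q M S := by
  refine of_jointly_injective (J := Unit) (fun _ => hN) (fun _ => f) fun x v hv => ⟨(), ?_⟩
  have : Function.Injective (f.app (vtx x)) := by
    rw [← ModuleCat.mono_iff_injective]
    infer_instance
  exact (map_ne_zero_iff _ this).2 hv

lemma IsCogeneratedBy.biproduct {J : Type} [Fintype J] {N : J → RepQ k Q} {S : Set Q}
    (hN : ∀ j, IsCogeneratedBy Q (N j) S) : IsCogeneratedBy Q (⨁ N) S := by
  refine of_jointly_injective hN (biproduct.π N) fun x v hv => ?_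
  by_contra! h
  exact hv ((biproduct_app_eq_sum N x v).trans (Finset.sum_eq_zero fun j _ => by simp [h j]))

lemma AlmostFinCopresented.exists_isCogeneratedBy (hfin : ∀ x y : Q, Finite (Quiver.Path x y))
    {M : RepQ k Q} (hM : AlmostFinCopresented k Q M) :
    ∃ S : Set Q, S.Finite ∧ IsCogeneratedBy Q M S := by
  obtain ⟨I₀, I₁, f, g, w, ⟨n, a, V, ⟨ψ⟩⟩, -, hse⟩ := hM
  have := hse.mono_f
  refine ⟨Set.range a, Set.finite_range a, IsCogeneratedBy.of_mono ?_ (f ≫ ψ.hom)⟩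
  refine IsCogeneratedBy.biproduct fun i => ?_
  refine IsCogeneratedBy.tensorRep hfin (Set.finite_range a) ?_ (V i)
  exact (isCogeneratedBy_injRep (a i)).mono (Set.singleton_subset_iff.2 (Set.mem_range_self i))

end Cogeneration

namespace IsCogeneratedBy

variable {k} {M : RepQ k Q} {S : Set Q}

lemma mem_of_socle_ne_bot (hM : IsCogeneratedBy Q M S) {x : Q} (hx : socle k Q M x ≠ ⊥) :
    x ∈ S := by
  obtain ⟨v, hv, hv0⟩ := (Submodule.ne_bot_iff _).1 hx
  obtain ⟨s, hs, q, hq⟩ := hM x v hv0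
  by_cases hlen : q.length = 0
  · rwa [Quiver.Path.eq_of_length_zero q hlen]
  · obtain ⟨y, e, q', rfl, -⟩ := (Quiver.Path.length_ne_zero_iff_eq_comp q).1 hlen
    rw [map_pth_comp] at hq
    exact absurd (by rw [show pth e.toPath = arr e from rfl, (mem_socle_iff M v).1 hv y e,
      map_zero]) hq

lemma exists_map_pth_mem_socle (hfin : ∀ x y : Q, Finite (Quiver.Path x y))
    (hS : S.Finite) (hM : IsCogeneratedBy Q M S) {x : Q} {v : M.obj (vtx x)} (hv : v ≠ 0) :
    ∃ (z : Q) (p : Quiver.Path x z), M.map (pth p) v ≠ 0 ∧ M.map (pth p) v ∈ socle k Q M z := by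
  classical
  have := hS.to_subtype
  obtain ⟨D, hD⟩ := exists_forall_length_le hfin (fun _ : S => x) Subtype.val
  let survives : ℕ → Prop :=
    fun m => ∃ (z : Q) (p : Quiver.Path x z), p.length = m ∧ M.map (pth p) v ≠ 0
  have survives_le : ∀ m, survives m → m ≤ D := by
    rintro m ⟨z, p, rfl, hp⟩
    obtain ⟨s, hs, q, -⟩ := hM z _ hp
    have := hD ⟨s, hs⟩ (p.comp q)
    rw [Quiver.Path.length_comp] at this
    omega
  -- a longest path along which `v` survives ends in the socle
  obtain ⟨z, p, hlen, hp⟩ : survives (Nat.findGreatest survives D) :=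
    Nat.findGreatest_spec (P := survives) (Nat.zero_le D) ⟨x, .nil, rfl, by rwa [map_pth_nil]⟩
  refine ⟨z, p, hp, (mem_socle_iff M _).2 fun y e => ?_⟩
  by_contra hne
  have hlonger : survives (Nat.findGreatest survives D + 1) :=
    ⟨y, p.cons e, by simp [hlen], by rwa [map_pth_cons]⟩
  exact Nat.findGreatest_is_greatest (Nat.lt_succ_self _) (survives_le _ hlonger) hlonger

lemma socleFinSupported (hS : S.Finite) (hM : IsCogeneratedBy Q M S) :
    SocleFinSupported k Q M :=
  hS.subset fun _ => hM.mem_of_socle_ne_bot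

lemma socleEssential (hfin : ∀ x y : Q, Finite (Quiver.Path x y)) (hS : S.Finite)
    (hM : IsCogeneratedBy Q M S) : SocleEssential k Q M := by
  rintro N ⟨x, hx⟩
  obtain ⟨v, hvN, hv⟩ := (Submodule.ne_bot_iff _).1 hx
  obtain ⟨z, p, hp, hpsoc⟩ := hM.exists_map_pth_mem_socle hfin hS hv
  exact ⟨z, (Submodule.ne_bot_iff _).2 ⟨_, Submodule.mem_inf.2 ⟨N.map_pth_mem p hvN, hpsoc⟩, hp⟩⟩

lemma setSocleFinite (hfin : ∀ x y : Q, Finite (Quiver.Path x y)) (hS : S.Finite)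
    (hM : IsCogeneratedBy Q M S) : SetSocleFinite Q (suppR k Q M) := by
  have hsoc := hM.socleFinSupported hS
  refine ⟨hsoc.toFinset, fun x (hx : Nontrivial _) => ?_⟩
  obtain ⟨v, hv⟩ := exists_ne (0 : M.obj (vtx x))
  obtain ⟨z, p, hp, hpsoc⟩ := hM.exists_map_pth_mem_socle hfin hS hv
  exact ⟨z, hsoc.mem_toFinset.2 ((Submodule.ne_bot_iff _).2 ⟨_, hpsoc, hp⟩), p,
    nontrivial_of_mem_pathVerts M v p hp⟩

lemma not_hasRightInfPathIn (hfin : ∀ x y : Q, Finite (Quiver.Path x y)) (hS : S.Finite)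
    (hM : IsCogeneratedBy Q M S) : ¬ HasRightInfPathIn Q (suppR k Q M) := by
  refine not_hasRightInfPathIn_of_forall_path_to hfin hS fun x (hx : Nontrivial _) => ?_
  obtain ⟨v, hv⟩ := exists_ne (0 : M.obj (vtx x))
  obtain ⟨s, hs, q, -⟩ := hM x v hv
  exact ⟨s, hs, ⟨q⟩⟩

end IsCogeneratedBy

section Generation

variable {k}

variable (Q) in
/-- The span of the images in `M(y)` of the spaces `M(s)`, `s ∈ S`, under paths of length
at least `d`. -/
def pathImageSpan (M : RepQ k Q) (S : Set Q) (d : ℕ) (y : Q) : Submodule k (M.obj (vtx y)) :=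
  ⨆ (s ∈ S) (q : Quiver.Path s y) (_ : d ≤ q.length), LinearMap.range (M.map (pth q)).hom

variable (Q) in
def IsGeneratedBy (M : RepQ k Q) (S : Set Q) : Prop := ∀ y : Q, pathImageSpan Q M S 0 y = ⊤

variable {M : RepQ k Q} {S : Set Q}

lemma range_le_pathImageSpan {s y : Q} (hs : s ∈ S) (q : Quiver.Path s y) {d : ℕ}
    (hd : d ≤ q.length) : LinearMap.range (M.map (pth q)).hom ≤ pathImageSpan Q M S d y :=
  le_iSup₂_of_le s hs (le_iSup₂_of_le q hd le_rfl)

lemma pathImageSpan_antitone {d d' : ℕ} (h : d ≤ d') (y : Q) :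
    pathImageSpan Q M S d' y ≤ pathImageSpan Q M S d y :=
  iSup₂_le fun _ hs => iSup₂_le fun q hd => range_le_pathImageSpan hs q (h.trans hd)

lemma pathImageSpan_eq_bot {d : ℕ} {y : Q} (h : ∀ s ∈ S, ∀ q : Quiver.Path s y, q.length < d) :
    pathImageSpan Q M S d y = ⊥ :=
  le_bot_iff.1 <| iSup₂_le fun s hs => iSup₂_le fun q hd => absurd hd (h s hs q).not_ge

lemma map_pathImageSpan_le {d : ℕ} {y z : Q} (p : Quiver.Path y z) :
    (pathImageSpan Q M S d y).map (M.map (pth p)).hom ≤ pathImageSpan Q M S (d + p.length) z := by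
  rw [Submodule.map_le_iff_le_comap]
  refine iSup₂_le fun s hs => iSup₂_le fun q hd => ?_
  rintro _ ⟨m, rfl⟩
  change M.map (pth p) (M.map (pth q) m) ∈ pathImageSpan Q M S (d + p.length) z
  rw [← map_pth_comp]
  exact range_le_pathImageSpan hs (q.comp p) (by simp [hd]) ⟨m, rfl⟩

lemma map_pathImageSpan_le_of_commute {N : RepQ k Q}
    (L : ∀ y : Q, M.obj (vtx y) →ₗ[k] N.obj (vtx y))
    (hL : ∀ {s y : Q} (q : Quiver.Path s y) (m : M.obj (vtx s)),
      L y (M.map (pth q) m) = N.map (pth q) (L s m)) (d : ℕ) (y : Q) :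
    (pathImageSpan Q M S d y).map (L y) ≤ pathImageSpan Q N S d y := by
  rw [Submodule.map_le_iff_le_comap]
  refine iSup₂_le fun s hs => iSup₂_le fun q hd => ?_
  rintro _ ⟨m, rfl⟩
  exact range_le_pathImageSpan hs q hd ⟨L s m, (hL q m).symm⟩

lemma IsGeneratedBy.of_jointly_surjective {J : Type} {N : J → RepQ k Q}
    (hN : ∀ j, IsGeneratedBy Q (N j) S) (L : ∀ j (y : Q), (N j).obj (vtx y) →ₗ[k] M.obj (vtx y))
    (hL : ∀ j {s y : Q} (q : Quiver.Path s y) (m : (N j).obj (vtx s)),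
      L j y ((N j).map (pth q) m) = M.map (pth q) (L j s m))
    (hsurj : ∀ y : Q, ⨆ j, LinearMap.range (L j y) = ⊤) : IsGeneratedBy Q M S := by
  intro y
  rw [eq_top_iff, ← hsurj y]
  refine iSup_le fun j => ?_
  rw [LinearMap.range_eq_map, ← hN j y]
  exact map_pathImageSpan_le_of_commute (L j) (hL j) 0 y

lemma IsGeneratedBy.mono {T : Set Q} (hM : IsGeneratedBy Q M S) (hST : S ⊆ T) :
    IsGeneratedBy Q M T := fun y =>
  eq_top_iff.2 <| (hM y).ge.trans <| iSup₂_le fun _ hs => iSup₂_le fun q hd =>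
    range_le_pathImageSpan (hST hs) q hd

lemma projRep_map_pth_single (a : Q) {y z : Q} (q : Quiver.Path y z) (ρ : Quiver.Path a y)
    (c : k) : (projRep k Q a).map (pth q) (Finsupp.single ρ c) = Finsupp.single (ρ.comp q) c := by
  induction q with
  | nil => exact map_pth_nil _ _
  | cons q e ih =>
    erw [map_pth_cons, ih]
    exact Finsupp.mapDomain_single

lemma isGeneratedBy_projRep (a : Q) : IsGeneratedBy Q (projRep k Q a) {a} := by
  intro y
  rw [eq_top_iff]
  rintro f -
  induction f using Finsupp.induction_linear with
  | zero => exact Submodule.zero_mem _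
  | add f g hf hg => exact Submodule.add_mem _ hf hg
  | single ρ c =>
    refine range_le_pathImageSpan (M := projRep k Q a) (S := {a}) rfl ρ (Nat.zero_le _)
      ⟨Finsupp.single (Quiver.Path.nil : Quiver.Path a a) c, ?_⟩
    show (projRep k Q a).map (pth ρ) _ = _
    rw [projRep_map_pth_single, Quiver.Path.nil_comp]

lemma IsGeneratedBy.tensorRep {N : RepQ k Q} (hN : IsGeneratedBy Q N S) (V : ModuleCat.{0} k) :
    IsGeneratedBy Q (tensorRep k N V) S := by
  refine of_jointly_surjective (J := V) (fun _ => hN)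
    (fun v y => (TensorProduct.mk k (N.obj (vtx y)) V).flip v) (fun _ _ _ _ _ => rfl) fun y => ?_
  refine eq_top_iff.2 ?_
  rintro t -
  induction t using TensorProduct.induction_on with
  | zero => exact Submodule.zero_mem _
  | add t t' ht ht' => exact Submodule.add_mem _ ht ht'
  | tmul n v => exact Submodule.mem_iSup_of_mem v ⟨n, rfl⟩

lemma IsGeneratedBy.of_epi {N : RepQ k Q} (hN : IsGeneratedBy Q N S) (f : N ⟶ M) [Epi f] :
    IsGeneratedBy Q M S := by
  refine of_jointly_surjective (J := Unit) (fun _ => hN) (fun _ y => (f.app (vtx y)).hom)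
    (fun _ _ _ q m => NatTrans.naturality_apply f (pth q) m) fun y => ?_
  have : Function.Surjective (f.app (vtx y)) := by
    rw [← ModuleCat.epi_iff_surjective]
    infer_instance
  exact eq_top_iff.2 (le_iSup_of_le () (LinearMap.range_eq_top.2 this).ge)

lemma IsGeneratedBy.biproduct {J : Type} [Fintype J] {N : J → RepQ k Q}
    (hN : ∀ j, IsGeneratedBy Q (N j) S) : IsGeneratedBy Q (⨁ N) S := by
  refine of_jointly_surjective hN (fun j y => ((biproduct.ι N j).app (vtx y)).hom)
    (fun j _ _ q m => NatTrans.naturality_apply (biproduct.ι N j) (pth q) m) fun y => ?_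
  refine eq_top_iff.2 fun v _ => ?_
  rw [biproduct_app_eq_sum N y v]
  exact Submodule.sum_mem _ fun j _ => Submodule.mem_iSup_of_mem j ⟨_, rfl⟩

lemma AlmostFinPresented.exists_isGeneratedBy (hM : AlmostFinPresented k Q M) :
    ∃ S : Set Q, S.Finite ∧ IsGeneratedBy Q M S := by
  obtain ⟨P₁, P₀, f, g, w, -, ⟨n, a, V, ⟨ψ⟩⟩, hse⟩ := hM
  have := hse.epi_g
  refine ⟨Set.range a, Set.finite_range a, IsGeneratedBy.of_epi ?_ (ψ.inv ≫ g)⟩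
  refine IsGeneratedBy.biproduct fun i => IsGeneratedBy.tensorRep ?_ (V i)
  exact (isGeneratedBy_projRep (a i)).mono (Set.singleton_subset_iff.2 (Set.mem_range_self i))

end Generation

namespace IsGeneratedBy

variable {k} {M : RepQ k Q} {S : Set Q}

lemma exists_map_pth_ne_zero (hM : IsGeneratedBy Q M S) {x : Q} {v : M.obj (vtx x)}
    (hv : v ≠ 0) : ∃ s ∈ S, ∃ (q : Quiver.Path s x) (w : M.obj (vtx s)), M.map (pth q) w ≠ 0 := by
  by_contra! h
  have hbot : pathImageSpan Q M S 0 x = ⊥ :=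
    le_bot_iff.1 <| iSup₂_le fun s hs => iSup₂_le fun q _ => by
      rintro _ ⟨w, rfl⟩
      exact (Submodule.mem_bot k).2 (h s hs q w)
  exact hv ((Submodule.mem_bot k).1 (hbot ▸ hM x ▸ Submodule.mem_top))

lemma radical_eq_top_of_notMem (hM : IsGeneratedBy Q M S) {x : Q} (hx : x ∉ S) :
    radical k Q M x = ⊤ := by
  rw [eq_top_iff, ← hM x]
  refine iSup₂_le fun s hs => iSup₂_le fun q _ => ?_
  cases q with
  | nil => exact absurd hs hx
  | cons q e =>
    rintro _ ⟨w, rfl⟩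
    change M.map (pth (q.cons e)) w ∈ _
    rw [map_pth_cons]
    exact Submodule.mem_iSup_of_mem _ (Submodule.mem_iSup_of_mem e ⟨_, rfl⟩)

lemma topFinSupported (hS : S.Finite) (hM : IsGeneratedBy Q M S) : TopFinSupported k Q M :=
  hS.subset fun _ hx => by_contra fun hxS => hx (hM.radical_eq_top_of_notMem hxS)

lemma radical_le_pathImageSpan_one (hM : IsGeneratedBy Q M S) (x : Q) :
    radical k Q M x ≤ pathImageSpan Q M S 1 x := by
  refine iSup₂_le fun y e => ?_
  rw [LinearMap.range_eq_map, ← hM y]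
  exact map_pathImageSpan_le e.toPath

lemma pathImageSpan_le_sup (hM : IsGeneratedBy Q M S) (N : SubRep k Q M)
    (hN : ∀ x, N.carrier x ⊔ radical k Q M x = ⊤) (d : ℕ) (y : Q) :
    pathImageSpan Q M S d y ≤ N.carrier y ⊔ pathImageSpan Q M S (d + 1) y := by
  refine iSup₂_le fun s _ => iSup₂_le fun q hd => ?_
  rw [LinearMap.range_eq_map, ← hN s, Submodule.map_sup]
  refine sup_le_sup ?_ ?_
  · rw [Submodule.map_le_iff_le_comap]
    exact fun m hm => N.map_pth_mem q hm
  · calc (radical k Q M s).map (M.map (pth q)).hom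
        ≤ (pathImageSpan Q M S 1 s).map (M.map (pth q)).hom :=
          Submodule.map_mono (hM.radical_le_pathImageSpan_one s)
      _ ≤ pathImageSpan Q M S (1 + q.length) y := map_pathImageSpan_le q
      _ ≤ pathImageSpan Q M S (d + 1) y := pathImageSpan_antitone (by omega) y

lemma topEssential (hfin : ∀ x y : Q, Finite (Quiver.Path x y)) (hS : S.Finite)
    (hM : IsGeneratedBy Q M S) : TopEssential k Q M := by
  intro N hN x
  have hfill : ∀ (d : ℕ) (y : Q), N.carrier y ⊔ pathImageSpan Q M S d y = ⊤ := by
    intro d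
    induction d with
    | zero => exact fun y => by rw [hM y, sup_top_eq]
    | succ d ih =>
      intro y
      rw [eq_top_iff, ← ih y]
      exact sup_le le_sup_left (hM.pathImageSpan_le_sup N hN d y)
  have := hS.to_subtype
  obtain ⟨D, hD⟩ := exists_forall_length_le hfin Subtype.val (fun _ : S => x)
  rw [← hfill (D + 1) x, pathImageSpan_eq_bot fun s hs q => Nat.lt_succ_of_le (hD ⟨s, hs⟩ q),
    sup_bot_eq]

lemma setTopFinite (hS : S.Finite) (hM : IsGeneratedBy Q M S) :
    SetTopFinite Q (suppR k Q M) := by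
  refine ⟨hS.toFinset, fun x (hx : Nontrivial _) => ?_⟩
  obtain ⟨v, hv⟩ := exists_ne (0 : M.obj (vtx x))
  obtain ⟨s, hs, q, w, hw⟩ := hM.exists_map_pth_ne_zero hv
  exact ⟨s, hS.mem_toFinset.2 hs, q, nontrivial_of_mem_pathVerts M w q hw⟩

lemma not_hasLeftInfPathIn (hfin : ∀ x y : Q, Finite (Quiver.Path x y)) (hS : S.Finite)
    (hM : IsGeneratedBy Q M S) : ¬ HasLeftInfPathIn Q (suppR k Q M) := by
  refine not_hasLeftInfPathIn_of_forall_path_from hfin hS fun x (hx : Nontrivial _) => ?_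
  obtain ⟨v, hv⟩ := exists_ne (0 : M.obj (vtx x))
  obtain ⟨s, hs, q, -⟩ := hM.exists_map_pth_ne_zero hv
  exact ⟨s, hs, ⟨q⟩⟩

end IsGeneratedBy

/-- Let `k` be a field, `Q` a strongly locally finite quiver and `M` a
representation in `Rep(Q)`. Then:
(1) if `M` is almost finitely co-presented, then `soc M` is finitely supported and
essential in `M`, and `supp M` is socle-finite with no right infinite path;
(2) if `M` is almost finitely presented, then `top M` is finitely supported and essential
over `M`, and `supp M` is top-finite with no left infinite path. -/
theorem statement_2 (k : Type) [Field k] (Q : Type) [Quiver.{0} Q]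
    (hQ : StronglyLocallyFinite Q) (M : RepQ k Q) :
    (AlmostFinCopresented k Q M →
      SocleFinSupported k Q M ∧ SocleEssential k Q M ∧
        SetSocleFinite Q (suppR k Q M) ∧ ¬ HasRightInfPathIn Q (suppR k Q M)) ∧
    (AlmostFinPresented k Q M →
      TopFinSupported k Q M ∧ TopEssential k Q M ∧
        SetTopFinite Q (suppR k Q M) ∧ ¬ HasLeftInfPathIn Q (suppR k Q M)) := by
  obtain ⟨-, -, hfin⟩ := hQ
  constructor
  · intro hM
    obtain ⟨S, hS, hMS⟩ := hM.exists_isCogeneratedBy hfin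
    exact ⟨hMS.socleFinSupported hS, hMS.socleEssential hfin hS, hMS.setSocleFinite hfin hS,
      hMS.not_hasRightInfPathIn hfin hS⟩
  · intro hM
    obtain ⟨S, hS, hMS⟩ := hM.exists_isGeneratedBy
    exact ⟨hMS.topFinSupported hS, hMS.topEssential hfin hS, hMS.setTopFinite hS,
      hMS.not_hasLeftInfPathIn hfin hS⟩
end

section
/- Let C be an abelian category and 0 → X →^q Y →^p Z → 0 a short exact sequence in C. Then: (1) q is a minimal right almost split monomorphism if and only if Z is a simple object and p is a projective cover of Z; (2) p is a minimal left almost split epimorphism if and only if X is a simple object and q is an injective hull of X. -/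
open CategoryTheory CategoryTheory.Limits

universe uC vC

/-! If `q = S.f` is a monomorphism with cokernel `p = S.g`, a morphism into `Y` factors through
`q` exactly when its composite with `p` vanishes. Hence `q` is right almost split iff `Z ≠ 0` and
every `h` with `h ≫ p ≠ 0` is a retraction, and `q` is right minimal simply because it is mono.
Applied to the projection `Y ×_Z Z' ⟶ Y` for a nonzero `Z' ⟶ Z`, this condition shows that
every nonzero morphism into `Z` is epi, so `Z` is simple; applied to the epimorphism
`Y ×_B E ⟶ Y` for an epi `E ⟶ B`, it lifts every `Y ⟶ B` through `E`, so `Y` is projective;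
superfluity of `p` is immediate. Conversely, if `p` is a projective cover of a simple object,
`h ≫ p ≠ 0` forces `h ≫ p`, hence `h`, to be epi, and an epimorphism onto a projective splits.
Part (2) is part (1) in `Cᵒᵖ`. -/

open Opposite

section

variable {C : Type*} [Category C]

lemma isRetr_iff_isSplitEpi {X Y : C} (f : X ⟶ Y) : IsRetr f ↔ IsSplitEpi f :=
  ⟨fun ⟨s, hs⟩ => .mk' ⟨s, hs⟩, fun _ => ⟨section_ f, IsSplitEpi.id f⟩⟩

lemma rightMin_of_mono {X Y : C} (f : X ⟶ Y) [Mono f] : RightMin f := fun u hu => by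
  rw [(cancel_mono f).1 (hu.trans (Category.id_comp f).symm)]
  infer_instance

lemma isRetr_op_iff {X Y : C} (f : X ⟶ Y) : IsRetr f.op ↔ IsSect f :=
  ⟨fun ⟨s, hs⟩ => ⟨s.unop, Quiver.Hom.op_inj hs⟩, fun ⟨r, hr⟩ => ⟨r.op, congrArg Quiver.Hom.op hr⟩⟩

lemma rightAS_op_iff (P : Cᵒᵖ → Prop) {X Y : C} (f : X ⟶ Y) :
    RightAS P f.op ↔ LeftAS (fun W => P (op W)) f := by
  refine and_congr (not_congr (isRetr_op_iff f)) ⟨fun H W hW h hh => ?_, fun H W hW h hh => ?_⟩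
  · obtain ⟨u, hu⟩ := H hW h.op (by rwa [isRetr_op_iff])
    exact ⟨u.unop, Quiver.Hom.op_inj hu⟩
  · obtain ⟨u, hu⟩ := H (W := W.unop) hW h.unop (by rwa [← isRetr_op_iff])
    exact ⟨u.op, Quiver.Hom.unop_inj hu⟩

lemma rightMin_op_iff {X Y : C} (f : X ⟶ Y) : RightMin f.op ↔ LeftMin f := by
  refine ⟨fun H u hu => ?_, fun H u hu => ?_⟩
  · exact (isIso_op_iff u).1 (H u.op (congrArg Quiver.Hom.op hu))
  · exact (isIso_unop_iff u).1 (H u.unop (congrArg Quiver.Hom.unop hu))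

lemma minRightAS_op_iff (P : Cᵒᵖ → Prop) {X Y : C} (f : X ⟶ Y) :
    MinRightAS P f.op ↔ MinLeftAS (fun W => P (op W)) f :=
  and_congr (rightAS_op_iff P f) (rightMin_op_iff f)

lemma supEpiOn_op_iff (P : Cᵒᵖ → Prop) {X Y : C} (f : X ⟶ Y) :
    SupEpiOn P f.op ↔ EssMonoOn (fun W => P (op W)) f := by
  refine and_congr (op_epi_iff f) ⟨fun H W hW g hg => ?_, fun H W hW g hg => ?_⟩
  · exact (op_epi_iff g).1 (H hW g.op ((op_epi_iff (f ≫ g)).2 hg))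
  · exact (unop_mono_iff g).1 (H (W := W.unop) hW g.unop ((unop_mono_iff (g ≫ f.op)).2 hg))

lemma simple_op_iff [Abelian C] (X : C) : Simple (op X) ↔ Simple X := by
  refine ⟨fun _ => simple_of_cosimple X fun f _ => ?_, fun _ => ⟨fun {Y} f _ => ?_⟩⟩
  · rw [← isIso_op_iff, Simple.mono_isIso_iff_nonzero, Ne, Ne, ← op_zero, Quiver.Hom.op_inj.eq_iff]
  · rw [← isIso_unop_iff]
    refine ⟨fun h h0 => ?_, fun h => isIso_of_epi_of_nonzero fun h0 => h (Quiver.Hom.unop_inj h0)⟩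
    rw [h0, unop_zero] at h
    exact Simple.not_isZero X (IsZero.of_mono_zero X (unop Y))

end

section

variable {C : Type*} [Category C] [Abelian C]

lemma isRetr_f_iff {S : ShortComplex C} (hS : S.ShortExact) : IsRetr S.f ↔ IsZero S.X₃ := by
  have := hS.mono_f
  rw [isRetr_iff_isSplitEpi, ← hS.isIso_f_iff]
  exact ⟨fun _ => isIso_of_mono_of_isSplitEpi _, fun _ => inferInstance⟩

lemma rightAS_f_iff (P : C → Prop) {S : ShortComplex C} (hS : S.ShortExact) :
    RightAS P S.f ↔
      ¬ IsZero S.X₃ ∧ ∀ ⦃W : C⦄, P W → ∀ h : W ⟶ S.X₂, h ≫ S.g ≠ 0 → IsRetr h := by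
  have := hS.mono_f
  refine and_congr (not_congr (isRetr_f_iff hS))
    (forall₂_congr fun _ _ => forall_congr' fun h => ?_)
  rw [not_imp_comm]
  exact imp_congr_left (not_congr ⟨fun ⟨u, hu⟩ => by simp [← hu], fun hh => hS.exact.lift' h hh⟩)

variable {Y Z : C} (g : Y ⟶ Z)

lemma forall_isRetr_of_simple_of_projective [Simple Z] [Projective Y]
    (hg : SupEpiOn (fun _ => True) g) : ∀ ⦃W : C⦄ (h : W ⟶ Y), h ≫ g ≠ 0 → IsRetr h := by
  intro W h hh
  have : Epi (h ≫ g) := epi_of_nonzero_to_simple hh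
  have : Epi h := hg.2 trivial h this
  exact Projective.factors (𝟙 Y) h

variable [Epi g]

lemma epi_of_ne_zero_of_forall_isRetr (H : ∀ ⦃W : C⦄ (h : W ⟶ Y), h ≫ g ≠ 0 → IsRetr h)
    {W : C} {m : W ⟶ Z} (hm : m ≠ 0) : Epi m := by
  obtain ⟨s, hs⟩ := H (pullback.fst g m) fun h0 => hm <| (cancel_epi (pullback.snd g m)).1 <| by
    rw [← pullback.condition, h0, comp_zero]
  have hg : (s ≫ pullback.snd g m) ≫ m = g := by
    rw [Category.assoc, ← pullback.condition, ← Category.assoc, hs, Category.id_comp]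
  exact epi_of_epi_fac hg

lemma simple_of_forall_isRetr (hZ : ¬ IsZero Z)
    (H : ∀ ⦃W : C⦄ (h : W ⟶ Y), h ≫ g ≠ 0 → IsRetr h) : Simple Z :=
  ⟨fun m _ => ⟨fun _ h0 => hZ (IsZero.of_epi_eq_zero m h0),
    fun hm => have := epi_of_ne_zero_of_forall_isRetr g H hm; isIso_of_mono_of_epi m⟩⟩

lemma projective_of_forall_isRetr (hZ : ¬ IsZero Z)
    (H : ∀ ⦃W : C⦄ (h : W ⟶ Y), h ≫ g ≠ 0 → IsRetr h) : Projective Y := by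
  refine ⟨fun h e _ => ?_⟩
  obtain ⟨s, hs⟩ := H (pullback.snd e h) fun h0 => hZ (IsZero.of_epi_eq_zero _ h0)
  exact ⟨s ≫ pullback.fst e h, by
    rw [Category.assoc, pullback.condition, ← Category.assoc, hs, Category.id_comp]⟩

lemma supEpiOn_of_forall_isRetr (hZ : ¬ IsZero Z)
    (H : ∀ ⦃W : C⦄ (h : W ⟶ Y), h ≫ g ≠ 0 → IsRetr h) : SupEpiOn (fun _ => True) g :=
  ⟨inferInstance, fun _ _ u _ => (isRetr_iff_isSplitEpi u).1 (H u fun h0 =>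
    hZ (IsZero.of_epi_eq_zero _ h0)) |>.epi⟩

lemma forall_isRetr_iff_simple_projective_supEpiOn :
    (¬ IsZero Z ∧ ∀ ⦃W : C⦄ (h : W ⟶ Y), h ≫ g ≠ 0 → IsRetr h) ↔
      Simple Z ∧ Projective Y ∧ SupEpiOn (fun _ => True) g :=
  ⟨fun ⟨hZ, H⟩ => ⟨simple_of_forall_isRetr g hZ H, projective_of_forall_isRetr g hZ H,
      supEpiOn_of_forall_isRetr g hZ H⟩,
    fun ⟨_, _, hg⟩ => ⟨Simple.not_isZero Z, forall_isRetr_of_simple_of_projective g hg⟩⟩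

end

lemma minRightAS_f_iff {C : Type*} [Category C] [Abelian C] {S : ShortComplex C}
    (hS : S.ShortExact) :
    MinRightAS (fun _ => True) S.f ↔
      Simple S.X₃ ∧ Projective S.X₂ ∧ SupEpiOn (fun _ => True) S.g := by
  have := hS.mono_f
  have := hS.epi_g
  rw [MinRightAS, and_iff_left (rightMin_of_mono S.f), rightAS_f_iff _ hS]
  simp only [forall_const]
  exact forall_isRetr_iff_simple_projective_supEpiOn S.g

/-- Let `C` be an abelian category and `0 → X →q Y →p Z → 0` a short
exact sequence in `C`. Then: (1) `q` is a minimal right almost split monomorphism iff `Z`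
is a simple object and `p` is a projective cover of `Z` (a superfluous epimorphism from a
projective object); (2) `p` is a minimal left almost split epimorphism iff `X` is a simple
object and `q` is an injective hull of `X` (an essential monomorphism into an injective
object). -/
theorem statement_10 {C : Type uC} [Category.{vC} C] [Abelian C] (S : ShortComplex C)
    (hS : S.ShortExact) :
    ((MinRightAS (fun _ => True) S.f ∧ Mono S.f) ↔
      (Simple S.X₃ ∧ Projective S.X₂ ∧ SupEpiOn (fun _ => True) S.g)) ∧
    ((MinLeftAS (fun _ => True) S.g ∧ Epi S.g) ↔
      (Simple S.X₁ ∧ Injective S.X₂ ∧ EssMonoOn (fun _ => True) S.f)) := by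
  rw [and_iff_left hS.mono_f, and_iff_left hS.epi_g]
  refine ⟨minRightAS_f_iff hS, ?_⟩
  refine (minRightAS_op_iff _ S.g).symm.trans ((minRightAS_f_iff hS.op).trans ?_)
  exact and_congr (simple_op_iff S.X₁)
    (and_congr Injective.injective_iff_projective_op.symm (supEpiOn_op_iff _ S.f))
end
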